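/- Let h : X × X* → ℝ ∪ {+∞} be a proper, closed (norm-lower-semicontinuous) convex function with h(x,x*) ≥ ⟨x,x*⟩ for all (x,x*), and suppose P₁(D(h*)) ⊆ B_{X*}[L] for some 0 ≤ L < ∞. Then: (1) for each x* ∈ P₂(D(h)), the function x ↦ h(x, x*) is real-valued and L-Lipschitz continuous on X; (2) D(h) = X × P₂(D(h)) ⊆ X × B_{X*}[L]; (3) P₂(D(h)) ⊆ B_{X*}[L] and P₁(D(h)) = X. -/

import Mathlib

open NormedSpace Classical

noncomputable section

/-- effective domain of an extended-real-valued function -/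
def edom {E : Type*} (f : E → EReal) : Set E := {x | f x < ⊤}

/-- indicator function (0 on the set, +∞ off it) -/
def indic {E : Type*} (C : Set E) : E → EReal := fun x => if x ∈ C then 0 else ⊤

/-- convexity for EReal-valued functions -/
def ErConvex {E : Type*} [AddCommGroup E] [Module ℝ E] (f : E → EReal) : Prop :=
  ∀ x y : E, ∀ a b : ℝ, 0 ≤ a → 0 ≤ b → a + b = 1 →
    f (a • x + b • y) ≤ (a : EReal) * f x + (b : EReal) * f y

/-- recession cone of a set -/
def recc {E : Type*} [AddCommGroup E] [Module ℝ E] (C : Set E) : Set E :=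
  {u | ∀ z ∈ C, ∀ t : ℝ, 0 ≤ t → z + t • u ∈ C}

variable (X : Type*) [NormedAddCommGroup X] [NormedSpace ℝ X]

/-- Fenchel conjugate of f : X → EReal, defined on the dual -/
def conj1 (f : X → EReal) : StrongDual ℝ X → EReal :=
  fun p => ⨆ x : X, ((p x : EReal) - f x)

/-- Fenchel conjugate of h : X × X* → EReal, defined on X* × X** via
⟨(x,x*),(y*,y**)⟩ = ⟨x,y*⟩ + ⟨y**,x*⟩ -/
def conj2 (h : X × StrongDual ℝ X → EReal) : StrongDual ℝ X × StrongDual ℝ (StrongDual ℝ X) → EReal :=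
  fun p => ⨆ z : X × StrongDual ℝ X, (((p.1 z.1 + p.2 z.2 : ℝ) : EReal) - h z)

/-- The J operation: (Jh)(x,x*) = h*(x*, x), with X canonically embedded in X** -/
def Jop (h : X × StrongDual ℝ X → EReal) : X × StrongDual ℝ X → EReal :=
  fun z => conj2 X h (z.2, inclusionInDoubleDual ℝ X z.1)

/-- the duality product as an EReal-valued function on X × X* -/
def pairE : X × StrongDual ℝ X → EReal := fun z => ((z.2 z.1 : ℝ) : EReal)

/-- weak-* closure of a subset of the dual -/
def wcl (S : Set (StrongDual ℝ X)) : Set (StrongDual ℝ X) :=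
  StrongDual.toWeakDual ⁻¹' closure (StrongDual.toWeakDual '' S)

/-- monotone subset of X × X* -/
def MonotoneSet (T : Set (X × StrongDual ℝ X)) : Prop :=
  ∀ p ∈ T, ∀ q ∈ T, 0 ≤ (p.2 - q.2) (p.1 - q.1)

/-- maximal monotone subset of X × X* -/
def MaxMonotone (T : Set (X × StrongDual ℝ X)) : Prop :=
  MonotoneSet X T ∧ ∀ S : Set (X × StrongDual ℝ X), MonotoneSet X S → T ⊆ S → S = T

/-- the Fitzpatrick family of a maximal monotone operator: closed convex functions
majorizing the duality product and coinciding with it on T -/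
def FitzFamily (T : Set (X × StrongDual ℝ X)) : Set ((X × StrongDual ℝ X) → EReal) :=
  {h | ErConvex h ∧ LowerSemicontinuous h ∧ (∀ z, pairE X z ≤ h z) ∧
       ∀ z ∈ T, h z = pairE X z}

/-- lower semicontinuity with respect to the strong × weak-* topology on X × X* -/
def lscSW (h : X × StrongDual ℝ X → EReal) : Prop :=
  LowerSemicontinuous (fun p : X × WeakDual ℝ X => h (p.1, StrongDual.toWeakDual.symm p.2))

end

/-!
If `h (x₀, x*)` is finite and `h (x₁, x*) > h (x₀, x*) + L‖x₁ - x₀‖`, separating a point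
below `h (x₁, x*)` from the closed convex epigraph of `h` (tilting a non-vertical hyperplane when
the separating one is vertical) gives a continuous affine minorant
`(x, x*) ↦ ⟨x, y*⟩ + ⟨y**, x*⟩ - β` of `h` that exceeds the bound at `(x₁, x*)`. Then
`h* (y*, y**) ≤ β`, so `‖y*‖ ≤ L`, contradicting the slope of the minorant between `(x₀, x*)`
and `(x₁, x*)`. This `L`-Lipschitz upper bound makes `h (·, x*)` finite on all of `X`, and
together with `⟨x, x*⟩ ≤ h (x, x*)` it forces `‖x*‖ ≤ L`.
-/

open ContinuousLinearMap Metric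

theorem LowerSemicontinuous.isClosed_realEpigraph {E : Type*} [TopologicalSpace E]
    {f : E → EReal} (hf : LowerSemicontinuous f) : IsClosed {p : E × ℝ | f p.1 ≤ p.2} :=
  hf.isClosed_epigraph.preimage
    (continuous_fst.prodMk (continuous_coe_real_ereal.comp continuous_snd))

theorem ErConvex.convex_realEpigraph {E : Type*} [AddCommGroup E] [Module ℝ E] {f : E → EReal}
    (hf : ErConvex f) : Convex ℝ {p : E × ℝ | f p.1 ≤ p.2} := by
  rintro p (hp : f p.1 ≤ p.2) q (hq : f q.1 ≤ q.2) a b ha hb hab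
  calc f (a • p.1 + b • q.1) ≤ (a : EReal) * f p.1 + (b : EReal) * f q.1 := hf _ _ a b ha hb hab
    _ ≤ (a : EReal) * p.2 + (b : EReal) * q.2 :=
      add_le_add (mul_le_mul_of_nonneg_left hp (EReal.coe_nonneg.2 ha))
        (mul_le_mul_of_nonneg_left hq (EReal.coe_nonneg.2 hb))
    _ = ((a • p + b • q).2 : ℝ) := by simp

section AffineMinorant

variable {E : Type*} [TopologicalSpace E] [AddCommGroup E] [Module ℝ E]

def IsAffineMinorant (f : E → EReal) (φ : StrongDual ℝ E) (β : ℝ) : Prop :=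
  ∀ z, ((φ z - β : ℝ) : EReal) ≤ f z

theorem isAffineMinorant_of_forall_le {f : E → EReal} {φ : StrongDual ℝ E} {β : ℝ}
    (h : ∀ z (t : ℝ), f z ≤ t → φ z - β ≤ t) : IsAffineMinorant f φ β :=
  fun z => EReal.le_of_forall_lt_iff_le.1 fun t ht => EReal.coe_le_coe_iff.2 (h z t ht.le)

theorem exists_isAffineMinorant_of_separation {f : E → EReal} {φ : StrongDual ℝ E}
    {s u r : ℝ} {z₁ : E} (hs : 0 < s) (hsep : ∀ z (t : ℝ), f z ≤ t → u < φ z + t * s)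
    (hsep₁ : φ z₁ + r * s < u) :
    ∃ (ψ : StrongDual ℝ E) (β : ℝ), IsAffineMinorant f ψ β ∧ r < ψ z₁ - β := by
  have hval : ∀ z, (-s⁻¹ • φ) z - -s⁻¹ * u = s⁻¹ * (u - φ z) := fun z => by
    simp only [smul_apply, smul_eq_mul]; ring
  refine ⟨-s⁻¹ • φ, -s⁻¹ * u, isAffineMinorant_of_forall_le fun z t hzt => ?_, ?_⟩
  · rw [hval, inv_mul_le_iff₀ hs]
    linarith [hsep z t hzt]
  · rw [hval, lt_inv_mul_iff₀ hs]
    linarith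

variable [IsTopologicalAddGroup E] [ContinuousSMul ℝ E] [LocallyConvexSpace ℝ E]

theorem ErConvex.exists_separation_realEpigraph {f : E → EReal} (hconv : ErConvex f)
    (hlsc : LowerSemicontinuous f) {z₁ : E} {r : ℝ} (hr : (r : EReal) < f z₁) :
    ∃ (φ : StrongDual ℝ E) (s u : ℝ), φ z₁ + r * s < u ∧
      ∀ z (t : ℝ), f z ≤ t → u < φ z + t * s := by
  obtain ⟨g, u, hg₁, hg⟩ := geometric_hahn_banach_point_closed hconv.convex_realEpigraph
    hlsc.isClosed_realEpigraph (x := (z₁, r)) hr.not_ge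
  have hdec : ∀ z (t : ℝ), g (z, t) = g.comp (inl ℝ E ℝ) z + t * g (0, 1) := fun z t => by
    rw [← g.comp_inl_add_comp_inr, comp_apply, comp_apply, inr_apply, ← smul_eq_mul,
      ← map_smul, Prod.smul_mk, smul_zero, smul_eq_mul, mul_one]
  exact ⟨g.comp (inl ℝ E ℝ), g (0, 1), u, hdec z₁ r ▸ hg₁,
    fun z t hzt => hdec z t ▸ hg (z, t) hzt⟩

theorem ErConvex.exists_isAffineMinorant_gt_of_eq_coe {f : E → EReal} (hconv : ErConvex f)
    (hlsc : LowerSemicontinuous f) {z₁ : E} {c r : ℝ} (hz₁ : f z₁ = c) (hr : r < c) :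
    ∃ (φ : StrongDual ℝ E) (β : ℝ), IsAffineMinorant f φ β ∧ r < φ z₁ - β := by
  obtain ⟨φ, s, u, hsep₁, hsep⟩ :=
    hconv.exists_separation_realEpigraph hlsc (hz₁ ▸ EReal.coe_lt_coe_iff.2 hr)
  have hs : 0 < s := by
    have := hsep z₁ c hz₁.le
    nlinarith
  exact exists_isAffineMinorant_of_separation hs hsep hsep₁

theorem ErConvex.exists_isAffineMinorant_gt {f : E → EReal} (hconv : ErConvex f)
    (hlsc : LowerSemicontinuous f) {z₀ : E} {c : ℝ} (hz₀ : f z₀ = c) {z₁ : E} {r : ℝ}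
    (hr : (r : EReal) < f z₁) :
    ∃ (φ : StrongDual ℝ E) (β : ℝ), IsAffineMinorant f φ β ∧ r < φ z₁ - β := by
  obtain ⟨φ, s, u, hsep₁, hsep⟩ := hconv.exists_separation_realEpigraph hlsc hr
  have hs : 0 ≤ s := by
    by_contra! hs
    have hmax := hsep z₀ (max c ((u - φ z₀) / s))
      (hz₀.trans_le (EReal.coe_le_coe_iff.2 (le_max_left _ _)))
    have := mul_le_mul_of_nonpos_right (le_max_right c ((u - φ z₀) / s)) hs.le
    rw [div_mul_cancel₀ _ hs.ne] at this
    linarith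
  rcases hs.eq_or_lt with rfl | hs
  · -- the separating hyperplane is vertical: tilt a minorant through `z₀` by a multiple of it
    obtain ⟨φ₀, β₀, hφ₀, -⟩ := hconv.exists_isAffineMinorant_gt_of_eq_coe hlsc hz₀ (sub_one_lt c)
    have hd : 0 < u - φ z₁ := by linarith
    set k := (|r - (φ₀ z₁ - β₀)| + 1) / (u - φ z₁)
    have hk : 0 ≤ k := by positivity
    refine ⟨φ₀ - k • φ, β₀ - k * u, isAffineMinorant_of_forall_le fun z t hzt => ?_, ?_⟩
    · have h₀ : φ₀ z - β₀ ≤ t := EReal.coe_le_coe_iff.1 ((hφ₀ z).trans hzt)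
      have hz : u < φ z := by simpa using hsep z t hzt
      simp only [sub_apply, smul_apply, smul_eq_mul]
      nlinarith
    · have hkd : k * (u - φ z₁) = |r - (φ₀ z₁ - β₀)| + 1 := div_mul_cancel₀ _ hd.ne'
      simp only [sub_apply, smul_apply, smul_eq_mul]
      linarith [le_abs_self (r - (φ₀ z₁ - β₀))]
  · exact exists_isAffineMinorant_of_separation hs hsep hsep₁

end AffineMinorant

theorem StrongDual.norm_le_of_le_add_mul_norm_sub {X : Type*} [NormedAddCommGroup X]
    [NormedSpace ℝ X] {ℓ : StrongDual ℝ X} {L c : ℝ} (hL : 0 ≤ L) {x₀ : X}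
    (hℓ : ∀ x, ℓ x ≤ c + L * ‖x - x₀‖) : ‖ℓ‖ ≤ L := by
  have hle : ∀ v, ℓ v ≤ L * ‖v‖ := by
    intro v
    have hray : ∀ t : ℝ, 0 < t → t * (ℓ v - L * ‖v‖) ≤ c - ℓ x₀ := fun t ht => by
      have := hℓ (x₀ + t • v)
      rw [map_add, map_smul, smul_eq_mul, add_sub_cancel_left, norm_smul,
        Real.norm_of_nonneg ht.le] at this
      linarith
    by_contra! hlt
    have := hray ((|c - ℓ x₀| + 1) / (ℓ v - L * ‖v‖)) (by have := sub_pos.2 hlt; positivity)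
    rw [div_mul_cancel₀ _ (sub_pos.2 hlt).ne'] at this
    linarith [le_abs_self (c - ℓ x₀)]
  refine opNorm_le_bound _ hL fun v => abs_le.2 ⟨?_, hle v⟩
  have := hle (-v)
  rw [map_neg, norm_neg] at this
  linarith

section Conjugate

variable {X : Type*} [NormedAddCommGroup X] [NormedSpace ℝ X] {h : X × StrongDual ℝ X → EReal}

theorem conj2_le_of_isAffineMinorant {φ : StrongDual ℝ (X × StrongDual ℝ X)} {β : ℝ}
    (hφ : IsAffineMinorant h φ β) :
    conj2 X h (φ.comp (inl ℝ _ _), φ.comp (inr ℝ _ _)) ≤ β := by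
  refine iSup_le fun z => ?_
  rw [φ.comp_inl_add_comp_inr, EReal.sub_le_iff_le_add (Or.inr (EReal.coe_ne_top _))
    (Or.inr (EReal.coe_ne_bot _))]
  calc ((φ z : ℝ) : EReal) = β + ((φ z - β : ℝ) : EReal) := by
        rw [← EReal.coe_add, add_sub_cancel]
    _ ≤ β + h z := add_le_add le_rfl (hφ z)

variable {L : ℝ}

theorem norm_comp_inl_le_of_isAffineMinorant
    (hdom : Prod.fst '' edom (conj2 X h) ⊆ closedBall 0 L)
    {φ : StrongDual ℝ (X × StrongDual ℝ X)} {β : ℝ} (hφ : IsAffineMinorant h φ β) :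
    ‖φ.comp (inl ℝ X (StrongDual ℝ X))‖ ≤ L :=
  mem_closedBall_zero_iff.1 <|
    hdom ⟨_, (conj2_le_of_isAffineMinorant hφ).trans_lt (EReal.coe_lt_top β), rfl⟩

theorem le_coe_add_mul_norm_sub_of_eq_coe (hconv : ErConvex h) (hlsc : LowerSemicontinuous h)
    (hdom : Prod.fst '' edom (conj2 X h) ⊆ closedBall 0 L) {xs : StrongDual ℝ X} {x₀ : X}
    {c : ℝ} (hx₀ : h (x₀, xs) = c) (x₁ : X) :
    h (x₁, xs) ≤ ((c + L * ‖x₁ - x₀‖ : ℝ) : EReal) := by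
  by_contra! hlt
  obtain ⟨φ, β, hφ, hφ₁⟩ := hconv.exists_isAffineMinorant_gt hlsc hx₀ hlt
  have hφ₀ : φ (x₀, xs) - β ≤ c := EReal.coe_le_coe_iff.1 (hx₀ ▸ hφ (x₀, xs))
  have hslope : φ (x₁, xs) - φ (x₀, xs) ≤ L * ‖x₁ - x₀‖ := calc
    φ (x₁, xs) - φ (x₀, xs) = φ.comp (inl ℝ X (StrongDual ℝ X)) (x₁ - x₀) := by
      rw [← map_sub, Prod.mk_sub_mk, sub_self]; rfl
    _ ≤ L * ‖x₁ - x₀‖ := (Real.le_norm_self _).trans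
      (le_of_opNorm_le _ (norm_comp_inl_le_of_isAffineMinorant hdom hφ) _)
  linarith

end Conjugate

theorem statement10_general (X : Type*) [NormedAddCommGroup X] [NormedSpace ℝ X]
    (h : X × StrongDual ℝ X → EReal) (hne_bot : ∀ z, h z ≠ ⊥) (hne_top : ∃ z, h z ≠ ⊤)
    (hlsc : LowerSemicontinuous h) (hconv : ErConvex h) (L : ℝ) (hL : 0 ≤ L)
    (hge : ∀ z, pairE X z ≤ h z)
    (hdom : Prod.fst '' edom (conj2 X h) ⊆ Metric.closedBall 0 L) :
    (∀ xs ∈ Prod.snd '' edom h,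
       (∀ x : X, h (x, xs) ≠ ⊤ ∧ h (x, xs) ≠ ⊥) ∧
       ∀ x z : X, |(h (x, xs)).toReal - (h (z, xs)).toReal| ≤ L * ‖x - z‖) ∧
    (edom h = (Set.univ : Set X) ×ˢ (Prod.snd '' edom h) ∧
     Prod.snd '' edom h ⊆ Metric.closedBall 0 L) ∧
    (Prod.snd '' edom h ⊆ Metric.closedBall 0 L ∧
     Prod.fst '' edom h = (Set.univ : Set X)) := by
  have hbound : ∀ z ∈ edom h, ∀ x, h (x, z.2) ≤ (((h z).toReal + L * ‖x - z.1‖ : ℝ) : EReal) :=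
    fun z hz => le_coe_add_mul_norm_sub_of_eq_coe hconv hlsc hdom
      (EReal.coe_toReal hz.ne (hne_bot z)).symm
  have hfin : ∀ xs ∈ Prod.snd '' edom h, ∀ x, h (x, xs) ≠ ⊤ := by
    rintro _ ⟨z, hz, rfl⟩ x
    exact ((hbound z hz x).trans_lt (EReal.coe_lt_top _)).ne
  have hlip : ∀ xs ∈ Prod.snd '' edom h, ∀ x y,
      (h (x, xs)).toReal ≤ (h (y, xs)).toReal + L * ‖x - y‖ := fun xs hxs x y =>
    EReal.toReal_le_toReal (hbound (y, xs) (hfin xs hxs y).lt_top x) (hne_bot _)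
      (EReal.coe_ne_top _)
  have hball : Prod.snd '' edom h ⊆ closedBall 0 L := by
    rintro _ ⟨z, hz, rfl⟩
    exact mem_closedBall_zero_iff.2 <| StrongDual.norm_le_of_le_add_mul_norm_sub hL fun x =>
      EReal.coe_le_coe_iff.1 ((hge (x, z.2)).trans (hbound z hz x))
  refine ⟨fun xs hxs => ⟨fun x => ⟨hfin xs hxs x, hne_bot _⟩, fun x y => ?_⟩, ⟨?_, hball⟩,
    hball, ?_⟩
  · exact abs_sub_le_iff.2 ⟨sub_le_iff_le_add'.2 (hlip xs hxs x y),
      sub_le_iff_le_add'.2 (norm_sub_rev x y ▸ hlip xs hxs y x)⟩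
  · ext ⟨x, xs⟩
    exact ⟨fun hz => ⟨trivial, _, hz, rfl⟩, fun ⟨_, hxs⟩ => (hfin xs hxs x).lt_top⟩
  · obtain ⟨z₀, hz₀⟩ := hne_top
    exact Set.eq_univ_of_forall fun x => ⟨(x, z₀.2), (hfin _ ⟨z₀, hz₀.lt_top, rfl⟩ x).lt_top, rfl⟩

theorem statement10 (X : Type*) [NormedAddCommGroup X] [NormedSpace ℝ X] [CompleteSpace X]
    (h : X × StrongDual ℝ X → EReal) (hne_bot : ∀ z, h z ≠ ⊥) (hne_top : ∃ z, h z ≠ ⊤)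
    (hlsc : LowerSemicontinuous h) (hconv : ErConvex h) (L : ℝ) (hL : 0 ≤ L)
    (hge : ∀ z, pairE X z ≤ h z)
    (hdom : Prod.fst '' edom (conj2 X h) ⊆ Metric.closedBall 0 L) :
    (∀ xs ∈ Prod.snd '' edom h,
       (∀ x : X, h (x, xs) ≠ ⊤ ∧ h (x, xs) ≠ ⊥) ∧
       ∀ x z : X, |(h (x, xs)).toReal - (h (z, xs)).toReal| ≤ L * ‖x - z‖) ∧
    (edom h = (Set.univ : Set X) ×ˢ (Prod.snd '' edom h) ∧
     Prod.snd '' edom h ⊆ Metric.closedBall 0 L) ∧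
    (Prod.snd '' edom h ⊆ Metric.closedBall 0 L ∧
     Prod.fst '' edom h = (Set.univ : Set X)) :=
  statement10_general X h hne_bot hne_top hlsc hconv L hL hge hdom
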